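/- arXiv:2201.00749 — 3 statements merged into one kernel-verified Lean document; each statement's English description precedes it below -/
import Mathlib

section
/- Let p, q be non-negative integers and r a positive integer with max{p,q} ≥ 1, and suppose f(z) = z^3 - p z^2 + q z + r has a non-real complex root λ. Then |λ| is strictly greater than the absolute value of the real root of f; i.e., if -α denotes the real root (with α > 0), then α < |λ|. -/
/-!
Since `-α` is a root, `λ` is a root of the quotient `z² - (α + p) z + (α² + p α + q)`, a real
quadratic. A non-real root of a real monic quadratic has squared modulus equal to the constant
term, so `|λ|² = α² + p α + q`, which exceeds `α²` because `p α + q > 0`.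
-/

open Complex

theorem sq_add_mul_add_eq_zero_of_cubic_roots {R : Type*} [CommRing R] [IsDomain R]
    {p q r z w : R} (hz : z ^ 3 - p * z ^ 2 + q * z + r = 0)
    (hw : w ^ 3 - p * w ^ 2 + q * w + r = 0) (hzw : z ≠ w) :
    z ^ 2 + (w - p) * z + (w ^ 2 - p * w + q) = 0 := by
  have hfactor : (z - w) * (z ^ 2 + (w - p) * z + (w ^ 2 - p * w + q)) = 0 := by
    linear_combination hz - hw
  exact (mul_eq_zero.mp hfactor).resolve_left (sub_ne_zero.mpr hzw)

theorem Complex.normSq_eq_of_sq_sub_mul_add_eq_zero {z : ℂ} (hz : z.im ≠ 0) {s t : ℝ}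
    (h : z ^ 2 - s * z + t = 0) : normSq z = t := by
  have hre := congrArg re h
  have him := congrArg im h
  simp only [sq, sub_re, add_re, mul_re, sub_im, add_im, mul_im, ofReal_re, ofReal_im,
    zero_re, zero_im, zero_mul, sub_zero, add_zero] at hre him
  have hs : s = 2 * z.re := by
    apply mul_left_cancel₀ hz
    linear_combination -him
  rw [normSq_apply]
  linear_combination -hre - z.re * hs

theorem stmt1_general (p q r : ℕ) (hpq : 1 ≤ max p q)
    (l : ℂ) (hl : l.im ≠ 0)
    (hroot : l ^ 3 - (p : ℂ) * l ^ 2 + (q : ℂ) * l + (r : ℂ) = 0)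
    (α : ℝ) (hα : 0 < α)
    (hαroot : (-α) ^ 3 - (p : ℝ) * (-α) ^ 2 + (q : ℝ) * (-α) + (r : ℝ) = 0) :
    α < ‖l‖ := by
  have hαroot' : (-(α : ℂ)) ^ 3 - p * (-(α : ℂ)) ^ 2 + q * (-(α : ℂ)) + r = 0 := by
    exact_mod_cast congrArg ofReal hαroot
  have hne : l ≠ -α := fun h => hl (by simp [h])
  have hquad := sq_add_mul_add_eq_zero_of_cubic_roots hroot hαroot' hne
  have hnormSq : normSq l = α ^ 2 + p * α + q :=
    normSq_eq_of_sq_sub_mul_add_eq_zero hl (s := α + p) (by push_cast; linear_combination hquad)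
  have hpos : 0 < (p : ℝ) * α + q := by
    rcases le_max_iff.mp hpq with hp | hq
    · exact add_pos_of_pos_of_nonneg (mul_pos (Nat.cast_pos.mpr hp) hα) q.cast_nonneg
    · exact add_pos_of_nonneg_of_pos (by positivity) (Nat.cast_pos.mpr hq)
  refine lt_of_pow_lt_pow_left₀ 2 (norm_nonneg l) ?_
  rw [Complex.sq_norm, hnormSq]
  linarith

/-- If `max p q ≥ 1` and `λ` is a non-real root of `z³ - p z² + q z + r`, then
its modulus strictly exceeds the positive number `α` with real root `-α`. -/
theorem stmt1 (p q r : ℕ) (hr : 1 ≤ r) (hpq : 1 ≤ max p q)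
    (l : ℂ) (hl : l.im ≠ 0)
    (hroot : l ^ 3 - (p : ℂ) * l ^ 2 + (q : ℂ) * l + (r : ℂ) = 0)
    (α : ℝ) (hα : 0 < α)
    (hαroot : (-α) ^ 3 - (p : ℝ) * (-α) ^ 2 + (q : ℝ) * (-α) + (r : ℝ) = 0) :
    α < ‖l‖ :=
  stmt1_general p q r hpq l hl hroot α hα hαroot
end

section
/- Let λ be a complex root of f(z) = z^3 - p z^2 + q z + r (p, q ≥ 0, r ≥ 1 integers). Then |λ|^2 is a root of the characteristic polynomial x^3 - q x^2 - p r x - r^2 of the matrix [[0,0,r],[1,q,p],[0,r,0]], provided conj(λ) is also a root of f (i.e., λ is non-real). -/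
/-! If `λ` is a non-real root, then `λ̄` is a second root, and Vieta's formulas for the roots
`λ, λ̄, μ` of the cubic identify `x³ - q x² - p r x - r²` as `(x - λλ̄)(x - λμ)(x - λ̄μ)`.
Evaluating at `x = λλ̄ = |λ|²` gives the claim. -/

section Cubic

variable {K : Type*} [Field K] {p q r a b : K}

theorem mul_isRoot_pairwiseProductCubic_of_vieta {c : K} (hp : a + b + c = p)
    (hq : a * b + b * c + c * a = q) (hr : a * b * c = -r) :
    (a * b) ^ 3 - q * (a * b) ^ 2 - p * r * (a * b) - r ^ 2 = 0 := by
  subst hp hq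
  rw [show r = -(a * b * c) by rw [hr, neg_neg]]
  ring

theorem cubic_vieta_of_two_roots (hab : a ≠ b)
    (ha : a ^ 3 - p * a ^ 2 + q * a + r = 0) (hb : b ^ 3 - p * b ^ 2 + q * b + r = 0) :
    a * b + b * (p - a - b) + (p - a - b) * a = q ∧ a * b * (p - a - b) = -r := by
  -- dividing `f a - f b` by `a - b`
  have hdiff : a ^ 2 + a * b + b ^ 2 - p * (a + b) + q = 0 := by
    refine (mul_eq_zero.mp ?_).resolve_left (sub_ne_zero.mpr hab)
    linear_combination ha - hb
  constructor
  · linear_combination -hdiff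
  · linear_combination ha - a * hdiff

theorem mul_isRoot_pairwiseProductCubic_of_two_roots (hab : a ≠ b)
    (ha : a ^ 3 - p * a ^ 2 + q * a + r = 0) (hb : b ^ 3 - p * b ^ 2 + q * b + r = 0) :
    (a * b) ^ 3 - q * (a * b) ^ 2 - p * r * (a * b) - r ^ 2 = 0 :=
  have hvieta := cubic_vieta_of_two_roots hab ha hb
  mul_isRoot_pairwiseProductCubic_of_vieta (by ring) hvieta.1 hvieta.2

end Cubic

open ComplexConjugate

theorem Complex.conj_isRoot_cubic {p q r : ℝ} {z : ℂ}
    (hz : z ^ 3 - p * z ^ 2 + q * z + r = 0) :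
    conj z ^ 3 - p * conj z ^ 2 + q * conj z + r = 0 := by
  simpa only [map_add, map_sub, map_mul, map_pow, Complex.conj_ofReal, map_zero]
    using congrArg conj hz

theorem stmt10_general (p q r : ℕ) (l : ℂ) (hl : l.im ≠ 0)
    (hroot : l ^ 3 - (p : ℂ) * l ^ 2 + (q : ℂ) * l + (r : ℂ) = 0) :
    (‖l‖ ^ 2) ^ 3 - (q : ℝ) * (‖l‖ ^ 2) ^ 2
      - (p : ℝ) * (r : ℝ) * (‖l‖ ^ 2) - (r : ℝ) ^ 2 = 0 := by
  have hl_ne_conj : l ≠ conj l := fun h => hl (Complex.conj_eq_iff_im.mp h.symm)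
  have hroot_real : l ^ 3 - ((p : ℝ) : ℂ) * l ^ 2 + ((q : ℝ) : ℂ) * l + ((r : ℝ) : ℂ) = 0 := by
    exact_mod_cast hroot
  have h := mul_isRoot_pairwiseProductCubic_of_two_roots hl_ne_conj hroot_real
    (Complex.conj_isRoot_cubic hroot_real)
  rw [Complex.mul_conj, Complex.normSq_eq_norm_sq] at h
  exact_mod_cast h

/-- If `λ` is a non-real root of `z³ - p z² + q z + r`, then `|λ|²` is a root of
`x³ - q x² - p r x - r²`, the characteristic polynomial of `[[0,0,r],[1,q,p],[0,r,0]]`. -/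
theorem stmt10 (p q r : ℕ) (hr : 1 ≤ r) (l : ℂ) (hl : l.im ≠ 0)
    (hroot : l ^ 3 - (p : ℂ) * l ^ 2 + (q : ℂ) * l + (r : ℂ) = 0) :
    (‖l‖ ^ 2) ^ 3 - (q : ℝ) * (‖l‖ ^ 2) ^ 2
      - (p : ℝ) * (r : ℝ) * (‖l‖ ^ 2) - (r : ℝ) ^ 2 = 0 :=
  stmt10_general p q r l hl hroot
end

section
/- Let M be an s×s integer matrix all of whose eigenvalues have absolute value > 1, let L be a d×s real matrix of rank d, and let λ ∈ ℝ^d, v ∈ ℤ^s. If ⟨(Mᵀ)^n (Lᵀ λ), v⟩ → 0 mod 1 as n → ∞ with exponentially fast convergence, then there exists n₀ such that ⟨(Mᵀ)^n (Lᵀ λ), v⟩ ∈ ℤ for all n ≥ n₀. -/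
/-!
By Cayley–Hamilton, `xₙ` satisfies the linear recurrence whose characteristic polynomial is the
integer polynomial `χ_M`. Applying that recurrence to the rounding errors `eₙ = xₙ - round xₙ`
produces integers tending to `0`, so eventually the errors satisfy the same recurrence. Factoring
`χ_M` over `ℂ` into `X - μ` with `|μ| > 1`, a null sequence annihilated by `χ_M(shift)` must
vanish: peeling off one factor at a time, it suffices that a null sequence with
`gₙ₊₁ = μ gₙ` is zero, and this holds because `g₀ = μ⁻ⁿ gₙ → 0`.
-/

open Polynomial Filter Topology Matrix

/-- `aeval (seqShift R) p f = 0` says that `f` satisfies the linear recurrence with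
characteristic polynomial `p`. -/
noncomputable def seqShift (R : Type*) [CommSemiring R] : Module.End R (ℕ → R) :=
  LinearMap.funLeft R R (· + 1)

section Shift

variable {S R : Type*} [CommSemiring S] [CommSemiring R] [Algebra S R]

@[simp]
theorem seqShift_apply (f : ℕ → R) (n : ℕ) : seqShift R f n = f (n + 1) := rfl

theorem seqShift_pow_apply (k : ℕ) (f : ℕ → R) (n : ℕ) : (seqShift R ^ k) f n = f (n + k) := by
  induction k generalizing f with
  | zero => rfl
  | succ k ih => rw [pow_succ, Module.End.mul_apply, ih]; rfl

theorem aeval_seqShift_apply (p : S[X]) (f : ℕ → R) (n : ℕ) :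
    aeval (seqShift R) p f n = ∑ i ∈ Finset.range (p.natDegree + 1), p.coeff i • f (n + i) := by
  simp [aeval_eq_sum_range, seqShift_pow_apply]

theorem aeval_seqShift_comp_add (p : S[X]) (f : ℕ → R) (N : ℕ) :
    aeval (seqShift R) p (fun n => f (n + N)) = fun n => aeval (seqShift R) p f (n + N) := by
  funext n
  simp only [aeval_seqShift_apply, add_right_comm]

theorem tendsto_aeval_seqShift [TopologicalSpace R] [IsTopologicalSemiring R]
    [ContinuousConstSMul S R] (p : S[X]) {f : ℕ → R} (hf : Tendsto f atTop (𝓝 0)) :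
    Tendsto (aeval (seqShift R) p f) atTop (𝓝 0) := by
  simp_rw [funext (aeval_seqShift_apply p f)]
  simpa using tendsto_finsetSum _ fun i _ =>
    (hf.comp (tendsto_add_atTop_nat i)).const_smul (p.coeff i)

end Shift

theorem aeval_seqShift_comp_ringHom {R R' : Type*} [CommRing R] [CommRing R'] (φ : R →+* R')
    (p : ℤ[X]) (f : ℕ → R) :
    aeval (seqShift R') p (φ ∘ f) = φ ∘ aeval (seqShift R) p f := by
  funext n
  simp [aeval_seqShift_apply]

section Expanding

variable {𝕜 : Type*} [NormedField 𝕜]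

theorem eq_zero_of_tendsto_of_succ_eq_mul {μ : 𝕜} (hμ : 1 < ‖μ‖) {g : ℕ → 𝕜}
    (hg : Tendsto g atTop (𝓝 0)) (hrec : ∀ n, g (n + 1) = μ * g n) : g = 0 := by
  have hpow : ∀ n, g n = μ ^ n * g 0 := fun n => by
    induction n with
    | zero => simp
    | succ n ih => rw [hrec, ih, pow_succ']; ring
  have hμ0 : μ ≠ 0 := norm_pos_iff.1 (one_pos.trans hμ)
  -- `g 0 = μ⁻ⁿ g n` is a product of two null sequences
  have hg0 : Tendsto (fun n => μ⁻¹ ^ n * g n) atTop (𝓝 0) := by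
    simpa only [zero_mul] using (tendsto_pow_atTop_nhds_zero_of_norm_lt_one
      (by rw [norm_inv]; exact inv_lt_one_of_one_lt₀ hμ)).mul hg
  have : g 0 = 0 := tendsto_nhds_unique tendsto_const_nhds
    (hg0.congr fun n => by rw [hpow n, inv_pow, inv_mul_cancel_left₀ (pow_ne_zero n hμ0)])
  funext n
  simp [hpow n, this]

theorem aeval_seqShift_X_sub_C_apply (μ : 𝕜) (g : ℕ → 𝕜) (n : ℕ) :
    aeval (seqShift 𝕜) (X - C μ) g n = g (n + 1) - μ * g n := by
  simp

theorem eq_zero_of_aeval_seqShift_eq_zero [IsAlgClosed 𝕜] {p : 𝕜[X]} (hp : p ≠ 0)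
    (hroots : ∀ μ, p.IsRoot μ → 1 < ‖μ‖) {g : ℕ → 𝕜} (hg : Tendsto g atTop (𝓝 0))
    (h : aeval (seqShift 𝕜) p g = 0) : g = 0 := by
  induction hdeg : p.natDegree generalizing p g with
  | zero =>
    rw [eq_C_of_natDegree_eq_zero hdeg] at hp h
    rw [aeval_C, Module.algebraMap_end_apply] at h
    exact (smul_eq_zero.1 h).resolve_left (by simpa using hp)
  | succ k ih =>
    obtain ⟨μ, hμ⟩ := IsAlgClosed.exists_root p (by
      rw [degree_eq_natDegree hp, hdeg]; exact_mod_cast k.succ_ne_zero)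
    set q := p /ₘ (X - C μ)
    have hpq : p = (X - C μ) * q := (mul_divByMonic_eq_iff_isRoot.2 hμ).symm
    have hq : q ≠ 0 := right_ne_zero_of_mul (hpq ▸ hp)
    have hqdeg : q.natDegree = k := by
      rw [hpq, natDegree_mul (X_sub_C_ne_zero μ) hq, natDegree_X_sub_C] at hdeg
      omega
    have hstep : aeval (seqShift 𝕜) (X - C μ) g = 0 :=
      ih hq (fun ν hν => hroots ν (by rw [hpq, IsRoot.def, eval_mul, hν.eq_zero, mul_zero]))
        (tendsto_aeval_seqShift _ hg)
        (by rw [← Module.End.mul_apply, ← map_mul, ← mul_comm, ← hpq, h]) hqdeg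
    refine eq_zero_of_tendsto_of_succ_eq_mul (hroots μ hμ) hg fun n => ?_
    rw [← sub_eq_zero, ← aeval_seqShift_X_sub_C_apply, hstep, Pi.zero_apply]

end Expanding

theorem aeval_seqShift_pow_mulVec_dotProduct {ι S R : Type*} [Fintype ι] [DecidableEq ι]
    [CommSemiring S] [CommRing R] [Algebra S R] {A : Matrix ι ι R} {p : S[X]}
    (hA : aeval A p = 0) (w u : ι → R) :
    aeval (seqShift R) p (fun k => (A ^ k *ᵥ w) ⬝ᵥ u) = 0 := by
  funext k
  have h : ((A ^ k * aeval A p) *ᵥ w) ⬝ᵥ u = 0 := by simp [hA]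
  rw [aeval_eq_sum_range, Finset.mul_sum, Matrix.sum_mulVec, sum_dotProduct] at h
  rw [aeval_seqShift_apply, Pi.zero_apply, ← h]
  refine Finset.sum_congr rfl fun i _ => ?_
  rw [mul_smul_comm, ← pow_add, smul_mulVec, smul_dotProduct]

theorem Int.eventually_eq_zero_of_tendsto_cast {k : ℕ → ℤ}
    (hk : Tendsto (fun n => (k n : ℝ)) atTop (𝓝 0)) : ∀ᶠ n in atTop, k n = 0 := by
  filter_upwards [hk.eventually (Metric.ball_mem_nhds 0 one_pos)] with n hn
  rw [dist_zero_right, Real.norm_eq_abs, ← Int.cast_abs, ← Int.cast_one, Int.cast_lt] at hn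
  exact Int.abs_lt_one_iff.1 hn

theorem eventually_aeval_seqShift_sub_round_eq_zero {p : ℤ[X]} {x : ℕ → ℝ}
    (hx : aeval (seqShift ℝ) p x = 0)
    (he : Tendsto (fun n => x n - round (x n)) atTop (𝓝 0)) :
    ∀ᶠ n in atTop, aeval (seqShift ℝ) p (fun n => x n - round (x n)) n = 0 := by
  set k := aeval (seqShift ℤ) p (fun n => round (x n))
  -- `p(S) e = -p(S) (round ∘ x)` is integer-valued and tends to `0`
  have hk : aeval (seqShift ℝ) p (fun n => x n - round (x n)) = -(Int.castRingHom ℝ ∘ k) := by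
    rw [show (fun n => x n - round (x n)) = x - Int.castRingHom ℝ ∘ fun n => round (x n) from rfl,
      map_sub, hx, aeval_seqShift_comp_ringHom, zero_sub]
  have hk0 : Tendsto (fun n => (k n : ℝ)) atTop (𝓝 0) := by
    simpa [hk] using (tendsto_aeval_seqShift p he).neg
  filter_upwards [Int.eventually_eq_zero_of_tendsto_cast hk0] with n hn
  simp [hk, hn]

theorem tendsto_sub_round_of_iInf_abs_sub_le {x : ℕ → ℝ} {C c : ℝ} (hc : c ∈ Set.Ioo 0 1)
    (h : ∀ n, ⨅ k : ℤ, |x n - k| ≤ C * c ^ n) :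
    Tendsto (fun n => x n - round (x n)) atTop (𝓝 0) :=
  squeeze_zero_norm (fun n => (le_ciInf (round_le (x n))).trans (h n))
    (by simpa using (tendsto_pow_atTop_nhds_zero_of_lt_one hc.1.le hc.2).const_mul C)

theorem eventually_eq_round_of_aeval_seqShift_eq_zero {p : ℤ[X]} (hp : p ≠ 0)
    (hroots : ∀ μ : ℂ, aeval μ p = 0 → 1 < ‖μ‖) {x : ℕ → ℝ} (hx : aeval (seqShift ℝ) p x = 0)
    (he : Tendsto (fun n => x n - round (x n)) atTop (𝓝 0)) :
    ∀ᶠ n in atTop, x n = round (x n) := by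
  obtain ⟨N, hN⟩ := (eventually_aeval_seqShift_sub_round_eq_zero hx he).exists_forall_of_atTop
  set e : ℕ → ℝ := fun n => x n - round (x n) with he_def
  have heN : (Complex.ofRealHom ∘ fun n => e (n + N)) = 0 := by
    refine eq_zero_of_aeval_seqShift_eq_zero (p := p.map (algebraMap ℤ ℂ))
      ((Polynomial.map_ne_zero_iff (algebraMap ℤ ℂ).injective_int).2 hp)
      (fun μ hμ => hroots μ (by rwa [IsRoot.def, eval_map_algebraMap] at hμ)) ?_ ?_
    · have := (Complex.continuous_ofReal.tendsto 0).comp (he.comp (tendsto_add_atTop_nat N))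
      rwa [Complex.ofReal_zero] at this
    · rw [aeval_map_algebraMap, aeval_seqShift_comp_ringHom, aeval_seqShift_comp_add (f := e)]
      funext n
      exact (congrArg Complex.ofRealHom (hN (n + N) (Nat.le_add_left N n))).trans (map_zero _)
  filter_upwards [eventually_ge_atTop N] with n hn
  have hn0 := congrFun heN (n - N)
  simp only [Nat.sub_add_cancel hn, Function.comp_apply, Pi.zero_apply, map_eq_zero, he_def,
    sub_eq_zero] at hn0
  exact hn0

theorem stmt19_general (s d : ℕ) (M : Matrix (Fin s) (Fin s) ℤ)
    (heig : ∀ μ : ℂ, ((M.map (Int.cast : ℤ → ℂ)).charpoly).IsRoot μ → 1 < ‖μ‖)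
    (L : Matrix (Fin d) (Fin s) ℝ)
    (lam : Fin d → ℝ) (v : Fin s → ℤ)
    (x : ℕ → ℝ)
    (hx : ∀ n, x n = ∑ i, ((M.transpose.map (Int.cast : ℤ → ℝ)) ^ n).mulVec
        (L.transpose.mulVec lam) i * (v i : ℝ))
    (hconv : ∃ C : ℝ, 0 < C ∧ ∃ c : ℝ, c ∈ Set.Ioo (0 : ℝ) 1 ∧
      ∀ n : ℕ, (⨅ k : ℤ, |x n - (k : ℝ)|) ≤ C * c ^ n) :
    ∃ n₀ : ℕ, ∀ n ≥ n₀, ∃ k : ℤ, x n = (k : ℝ) := by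
  obtain ⟨C, -, c, hc, hdist⟩ := hconv
  have hA : aeval (M.transpose.map (Int.cast : ℤ → ℝ)) M.charpoly = 0 := by
    rw [← aeval_map_algebraMap ℝ, algebraMap_int_eq, ← charpoly_transpose, ← charpoly_map]
    exact aeval_self_charpoly _
  have hroots (μ : ℂ) (hμ : aeval μ M.charpoly = 0) : 1 < ‖μ‖ :=
    heig μ (by rwa [show (Int.cast : ℤ → ℂ) = algebraMap ℤ ℂ from rfl, charpoly_map, IsRoot.def,
      eval_map_algebraMap])
  have hxp : aeval (seqShift ℝ) M.charpoly x = 0 := by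
    rw [funext hx]
    exact aeval_seqShift_pow_mulVec_dotProduct hA _ _
  obtain ⟨N, hN⟩ := (eventually_eq_round_of_aeval_seqShift_eq_zero (charpoly_monic M).ne_zero
    hroots hxp (tendsto_sub_round_of_iInf_abs_sub_le hc hdist)).exists_forall_of_atTop
  exact ⟨N, fun n hn => ⟨round (x n), hN n hn⟩⟩

/-- If all eigenvalues of the integer matrix `M` have modulus `> 1`, `L` is a real
`d × s` matrix of rank `d`, and `xₙ = ⟨(Mᵀ)ⁿ(Lᵀλ), v⟩` tends to `0` mod `1`
exponentially fast, then `xₙ` is an integer for all large `n`. -/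
theorem stmt19 (s d : ℕ) (M : Matrix (Fin s) (Fin s) ℤ)
    (heig : ∀ μ : ℂ, ((M.map (Int.cast : ℤ → ℂ)).charpoly).IsRoot μ → 1 < ‖μ‖)
    (L : Matrix (Fin d) (Fin s) ℝ) (hrank : L.rank = d)
    (lam : Fin d → ℝ) (v : Fin s → ℤ)
    (x : ℕ → ℝ)
    (hx : ∀ n, x n = ∑ i, ((M.transpose.map (Int.cast : ℤ → ℝ)) ^ n).mulVec
        (L.transpose.mulVec lam) i * (v i : ℝ))
    (hconv : ∃ C : ℝ, 0 < C ∧ ∃ c : ℝ, c ∈ Set.Ioo (0 : ℝ) 1 ∧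
      ∀ n : ℕ, (⨅ k : ℤ, |x n - (k : ℝ)|) ≤ C * c ^ n) :
    ∃ n₀ : ℕ, ∀ n ≥ n₀, ∃ k : ℤ, x n = (k : ℝ) :=
  stmt19_general s d M heig L lam v x hx hconv
end
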